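/- arXiv:1901.01991 — 2 statements merged into one kernel-verified Lean document; each statement's English description precedes it below -/
import Mathlib

section
/- For every independent set I in the hypercube Q_d, at least one of I ∩ E, I ∩ O is small, i.e., |[I ∩ E]| ≤ 2^(d-2) or |[I ∩ O]| ≤ 2^(d-2). -/
/-- The `d`-dimensional hypercube graph. -/
def cubeGraph (d : ℕ) : SimpleGraph (Fin d → ZMod 2) where
  Adj x y := hammingDist x y = 1
  symm := ⟨fun x y (h : hammingDist x y = 1) => by rwa [hammingDist_comm]⟩
  loopless := ⟨fun x (h : hammingDist x x = 1) => by simp [hammingDist_self] at h⟩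

/-- An independent set: no two of its vertices are adjacent. -/
def IsIndep {V : Type*} (G : SimpleGraph V) (s : Set V) : Prop :=
  ∀ u ∈ s, ∀ v ∈ s, ¬ G.Adj u v

/-- The even bipartition class of the hypercube. -/
def evenSide (d : ℕ) : Set (Fin d → ZMod 2) := {v | ∑ i, v i = 0}

/-- The odd bipartition class of the hypercube. -/
def oddSideSet (d : ℕ) : Set (Fin d → ZMod 2) := {v | ∑ i, v i = 1}

/-- The neighbourhood of a set of vertices. -/
def nbhd {V : Type*} (G : SimpleGraph V) (A : Set V) : Set V := {y | ∃ a ∈ A, G.Adj a y}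

/-- The closure of `A` within a side `X`. -/
def closure' {V : Type*} (G : SimpleGraph V) (X A : Set V) : Set V :=
  {v ∈ X | G.neighborSet v ⊆ nbhd G A}


/-!
If `x` lies in `[I ∩ E]` and `y` in `[I ∩ O]` were adjacent, then `y ∈ N(I ∩ E)` gives a neighbour
`u ∈ I` of `y`, and `u ∈ N(y) ⊆ N(I ∩ O)` gives a neighbour of `u` in `I`, contradicting independence.
So flipping the first coordinate maps `[I ∩ E]` injectively into `O ∖ [I ∩ O]`, and symmetrically
`[I ∩ O]` into `E ∖ [I ∩ E]`. Hence `2 (|[I ∩ E]| + |[I ∩ O]|) ≤ |E| + |O| = 2^d`.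
-/

open Set

section Closure

variable {V : Type*} {G : SimpleGraph V}

theorem not_adj_of_mem_closure' {I A B X Y : Set V} {a b : V} (hI : IsIndep G I)
    (hAI : A ⊆ I) (hBI : B ⊆ I) (ha : a ∈ closure' G X A) (hb : b ∈ closure' G Y B) :
    ¬ G.Adj a b := by
  intro hab
  obtain ⟨u, huA, hub⟩ := ha.2 hab
  obtain ⟨w, hwB, hwu⟩ := hb.2 hub.symm
  exact hI w (hBI hwB) u (hAI huA) hwu

theorem ncard_add_ncard_le_of_injective_of_adj {f : V → V} (hf : Function.Injective f)
    (hadj : ∀ v, G.Adj v (f v)) {A B Y : Set V} (hY : Y.Finite) (hAY : MapsTo f A Y)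
    (hBY : B ⊆ Y) (hAB : ∀ a ∈ A, ∀ b ∈ B, ¬ G.Adj a b) :
    A.ncard + B.ncard ≤ Y.ncard := by
  have hdisj : Disjoint (f '' A) B := by
    rw [disjoint_left]
    rintro _ ⟨a, ha, rfl⟩ hb
    exact hAB a ha _ hb (hadj a)
  calc A.ncard + B.ncard = (f '' A ∪ B).ncard := by
        rw [ncard_union_eq hdisj (hY.subset (image_subset_iff.2 hAY)) (hY.subset hBY),
          ncard_image_of_injective A hf]
    _ ≤ Y.ncard := ncard_le_ncard (union_subset (image_subset_iff.2 hAY) hBY) hY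

end Closure

section Cube

variable {d : ℕ}

theorem cubeGraph_adj_add_single (v : Fin d → ZMod 2) (i : Fin d) :
    (cubeGraph d).Adj v (v + Pi.single i 1) := by
  change hammingDist v (v + Pi.single i 1) = 1
  rw [hammingDist_eq_hammingNorm, neg_add_cancel_left, hammingNorm, Finset.card_eq_one]
  refine ⟨i, ?_⟩
  ext j
  by_cases h : j = i <;> simp [h]

theorem sum_add_single (v : Fin d → ZMod 2) (i : Fin d) :
    ∑ j, (v + Pi.single i 1 : Fin d → ZMod 2) j = ∑ j, v j + 1 := by
  simp [Finset.sum_add_distrib]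

theorem mapsTo_add_single_evenSide (i : Fin d) :
    MapsTo (· + Pi.single i 1) (evenSide d) (oddSideSet d) := fun v (hv : ∑ j, v j = 0) => by
  change ∑ j, (v + Pi.single i 1 : Fin d → ZMod 2) j = 1
  rw [sum_add_single, hv, zero_add]

theorem mapsTo_add_single_oddSideSet (i : Fin d) :
    MapsTo (· + Pi.single i 1) (oddSideSet d) (evenSide d) := fun v (hv : ∑ j, v j = 1) => by
  change ∑ j, (v + Pi.single i 1 : Fin d → ZMod 2) j = 0
  rw [sum_add_single, hv]
  decide

theorem disjoint_evenSide_oddSideSet : Disjoint (evenSide d) (oddSideSet d) :=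
  disjoint_left.2 fun _ (hE : _ = 0) (hO : _ = 1) => zero_ne_one (hE.symm.trans hO)

theorem ncard_evenSide_add_ncard_oddSideSet_le :
    (evenSide d).ncard + (oddSideSet d).ncard ≤ 2 ^ d := by
  rw [← ncard_union_eq disjoint_evenSide_oddSideSet]
  simpa using ncard_le_card (evenSide d ∪ oddSideSet d)

theorem two_mul_ncard_closure'_add_le (i : Fin d) {I : Set (Fin d → ZMod 2)}
    (hI : IsIndep (cubeGraph d) I) :
    2 * ((closure' (cubeGraph d) (evenSide d) (I ∩ evenSide d)).ncard +
      (closure' (cubeGraph d) (oddSideSet d) (I ∩ oddSideSet d)).ncard) ≤ 2 ^ d := by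
  set A := closure' (cubeGraph d) (evenSide d) (I ∩ evenSide d)
  set B := closure' (cubeGraph d) (oddSideSet d) (I ∩ oddSideSet d)
  have hinj := add_left_injective (Pi.single i 1 : Fin d → ZMod 2)
  have hA : A.ncard + B.ncard ≤ (oddSideSet d).ncard :=
    ncard_add_ncard_le_of_injective_of_adj hinj (cubeGraph_adj_add_single · i) (toFinite _)
      (fun _ ha => mapsTo_add_single_evenSide i ha.1) (fun _ hb => hb.1)
      fun _ ha _ hb => not_adj_of_mem_closure' hI inter_subset_left inter_subset_left ha hb
  have hB : B.ncard + A.ncard ≤ (evenSide d).ncard :=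
    ncard_add_ncard_le_of_injective_of_adj hinj (cubeGraph_adj_add_single · i) (toFinite _)
      (fun _ hb => mapsTo_add_single_oddSideSet i hb.1) (fun _ ha => ha.1)
      fun _ hb _ ha => not_adj_of_mem_closure' hI inter_subset_left inter_subset_left hb ha
  have := ncard_evenSide_add_ncard_oddSideSet_le (d := d)
  omega

end Cube

/-- for every independent set `I` in `Q_d`, at least one of `I ∩ E`,
`I ∩ O` is small, i.e. has closure of size at most `2^(d-2)`. -/
theorem one_side_small (d : ℕ) (I : Set (Fin d → ZMod 2))
    (hI : IsIndep (cubeGraph d) I) :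
    (closure' (cubeGraph d) (evenSide d) (I ∩ evenSide d)).ncard ≤ 2 ^ (d - 2) ∨
    (closure' (cubeGraph d) (oddSideSet d) (I ∩ oddSideSet d)).ncard ≤ 2 ^ (d - 2) := by
  cases d with
  -- `2 ^ (0 - 2) = 1` is the number of vertices of `Q_0`.
  | zero => exact .inl (by simpa using ncard_le_card (closure' (cubeGraph 0) (evenSide 0) _))
  | succ n =>
    have hsum := two_mul_ncard_closure'_add_le 0 hI
    have hpow : 2 ^ (n + 1) ≤ 4 * 2 ^ (n + 1 - 2) := by
      rw [show 4 = 2 ^ 2 by rfl, ← pow_add]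
      exact Nat.pow_le_pow_right two_pos (by omega)
    omega
end

section
/- (Isoperimetric inequality in the cube) There is a constant c > 0 such that for all sufficiently large d and every A ⊆ E with |A| ≤ 2^(d-2), one has (|N(A)| - |A|)/|N(A)| ≥ c/√d. -/
/-!
Dropping the first coordinate identifies the even side of `Q_{n+1}` with `Q_n`; if `A`
corresponds to `S ⊆ Q_n`, then `N(A)` corresponds to `S` together with its outer vertex boundary
`∂S` in `Q_n`, so `|N(A)| - |A| = |∂S|`. The vertex boundary is controlled by a discrete Bobkov
inequality for the profile `J(t) = t(1 - t)/2`, proved by tensorising a two-point inequality over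
the coordinates. Applied to the indicator of `S` it gives `|S| (2^n - |S|) ≤ 2^n √n |∂S|`, hence
`|S| ≤ 2 √n |∂S|` when `|S| ≤ 2^(n-1)`, and the ratio in question is at least `1/(3√d)`.
-/

open Finset

namespace Hypercube

noncomputable section

lemma sqrt_sum_add_sq_le {ι : Type*} [Fintype ι] (u v : ι → ℝ) :
    √(∑ i, (u i + v i) ^ 2) ≤ √(∑ i, u i ^ 2) + √(∑ i, v i ^ 2) := by
  simpa [EuclideanSpace.norm_eq] using norm_add_le (WithLp.toLp 2 u) (WithLp.toLp 2 v)

lemma sqrt_add_sq_add_sq_le (p q g h : ℝ) :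
    √((p + q) ^ 2 + (g + h) ^ 2) ≤ √(p ^ 2 + g ^ 2) + √(q ^ 2 + h ^ 2) := by
  simpa [Fin.sum_univ_two] using sqrt_sum_add_sq_le ![p, g] ![q, h]

/-- Bobkov's argument only uses that this profile is nonnegative on `[0, 1]`, vanishes at `0`
and `1`, and satisfies the two-point inequality `profile_two_point`. -/
def profile (t : ℝ) : ℝ := t * (1 - t) / 2

lemma profile_nonneg {t : ℝ} (h₀ : 0 ≤ t) (h₁ : t ≤ 1) : 0 ≤ profile t :=
  div_nonneg (mul_nonneg h₀ (sub_nonneg.2 h₁)) zero_le_two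

lemma profile_two_point {a b : ℝ} (ha : 0 ≤ a) (hab : a ≤ b) (hb : b ≤ 1) :
    2 * profile ((a + b) / 2) ≤ √(profile a ^ 2 + ((b - a) / 2) ^ 2) + profile b := by
  have hdefect : 2 * profile ((a + b) / 2) - profile b = profile a + ((b - a) / 2) ^ 2 := by
    unfold profile; ring
  have hJa : profile a ≤ 1 / 8 := by unfold profile; nlinarith [sq_nonneg (2 * a - 1)]
  have ht : ((b - a) / 2) ^ 2 ≤ 1 / 4 := by nlinarith
  have hsq : (2 * profile ((a + b) / 2) - profile b) ^ 2 ≤ profile a ^ 2 + ((b - a) / 2) ^ 2 := by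
    rw [hdefect]
    have hslack : 0 ≤ 1 - 2 * profile a - ((b - a) / 2) ^ 2 := by linarith
    nlinarith [mul_nonneg (sq_nonneg ((b - a) / 2)) hslack]
  linarith [Real.le_sqrt_of_sq_le hsq]

/-- The one-dimensional step of the tensorisation: `G₀`, `G₁` are the squared gradients along
the remaining coordinates on the two faces. -/
lemma profile_tensor_step {a b G₀ G₁ : ℝ} (ha₀ : 0 ≤ a) (ha₁ : a ≤ 1) (hb₀ : 0 ≤ b)
    (hb₁ : b ≤ 1) (hG₀ : 0 ≤ G₀) (hG₁ : 0 ≤ G₁) :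
    2 * √(profile ((a + b) / 2) ^ 2 + ((√G₀ + √G₁) / 2) ^ 2)
      ≤ √(profile a ^ 2 + ((max (b - a) 0 / 2) ^ 2 + G₀))
        + √(profile b ^ 2 + ((max (a - b) 0 / 2) ^ 2 + G₁)) := by
  wlog hab : a ≤ b generalizing a b G₀ G₁
  · have := this hb₀ hb₁ ha₀ ha₁ hG₁ hG₀ (le_of_not_ge hab)
    rw [add_comm b, add_comm √G₁] at this
    linarith
  rw [max_eq_left (sub_nonneg.2 hab), max_eq_right (sub_nonpos.2 hab)]
  set p := √(profile a ^ 2 + ((b - a) / 2) ^ 2)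
  have hp : p ^ 2 = profile a ^ 2 + ((b - a) / 2) ^ 2 := Real.sq_sqrt (by positivity)
  have hmid : 0 ≤ 2 * profile ((a + b) / 2) := by
    linarith [profile_nonneg (t := (a + b) / 2) (by linarith) (by linarith)]
  calc 2 * √(profile ((a + b) / 2) ^ 2 + ((√G₀ + √G₁) / 2) ^ 2)
      = √((2 * profile ((a + b) / 2)) ^ 2 + (√G₀ + √G₁) ^ 2) := by
        rw [← Real.sqrt_sq zero_le_two, ← Real.sqrt_mul (by norm_num)]
        ring_nf
    _ ≤ √((p + profile b) ^ 2 + (√G₀ + √G₁) ^ 2) := by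
        gcongr
        exact profile_two_point ha₀ hab hb₁
    _ ≤ √(p ^ 2 + √G₀ ^ 2) + √(profile b ^ 2 + √G₁ ^ 2) := sqrt_add_sq_add_sq_le _ _ _ _
    _ = _ := by rw [hp, Real.sq_sqrt hG₀, Real.sq_sqrt hG₁]; ring_nf

variable {n : ℕ}

def flipCoord (i : Fin n) (x : Fin n → ZMod 2) : Fin n → ZMod 2 :=
  Function.update x i (x i + 1)

lemma flipCoord_flipCoord (i : Fin n) (x : Fin n → ZMod 2) : flipCoord i (flipCoord i x) = x := by
  simp [flipCoord, add_assoc, show (1 : ZMod 2) + 1 = 0 by decide]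

lemma flipCoord_cons_zero (a : ZMod 2) (x : Fin n → ZMod 2) :
    flipCoord 0 (Fin.cons a x : Fin (n + 1) → ZMod 2) = Fin.cons (a + 1) x := by
  simp [flipCoord, Fin.update_cons_zero]

lemma flipCoord_cons_succ (a : ZMod 2) (x : Fin n → ZMod 2) (i : Fin n) :
    flipCoord i.succ (Fin.cons a x : Fin (n + 1) → ZMod 2) = Fin.cons a (flipCoord i x) := by
  simp [flipCoord, Fin.cons_update]

lemma sum_flipCoord (i : Fin n) (x : Fin n → ZMod 2) :
    ∑ j, flipCoord i x j = ∑ j, x j + 1 := by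
  rw [flipCoord, sum_update_of_mem (mem_univ i), ← add_sum_erase _ x (mem_univ i),
    sdiff_singleton_eq_erase]
  ring

lemma sum_cube_eq_sum_cons {M : Type*} [AddCommMonoid M] (g : (Fin (n + 1) → ZMod 2) → M) :
    ∑ x, g x = ∑ x : Fin n → ZMod 2, (g (Fin.cons 0 x) + g (Fin.cons 1 x)) := by
  rw [← (Fin.consEquiv fun _ => ZMod 2).sum_comp, Fintype.sum_prod_type_right]
  exact sum_congr rfl fun x _ => Fin.sum_univ_two _

/-- The factor `1/2` is the derivative normalisation on the two-point space `{0, 1}`. -/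
def posGradSq (f : (Fin n → ZMod 2) → ℝ) (x : Fin n → ZMod 2) : ℝ :=
  ∑ i, (max (f (flipCoord i x) - f x) 0 / 2) ^ 2

lemma posGradSq_nonneg (f : (Fin n → ZMod 2) → ℝ) (x : Fin n → ZMod 2) : 0 ≤ posGradSq f x :=
  sum_nonneg fun _ _ => sq_nonneg _

lemma posGradSq_cons (f : (Fin (n + 1) → ZMod 2) → ℝ) (a : ZMod 2) (x : Fin n → ZMod 2) :
    posGradSq f (Fin.cons a x)
      = (max (f (Fin.cons (a + 1) x) - f (Fin.cons a x)) 0 / 2) ^ 2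
        + posGradSq (fun y => f (Fin.cons a y)) x := by
  simp only [posGradSq, Fin.sum_univ_succ, flipCoord_cons_zero, flipCoord_cons_succ]

lemma posGradSq_avg_le (f₀ f₁ : (Fin n → ZMod 2) → ℝ) (x : Fin n → ZMod 2) :
    posGradSq (fun y => (f₀ y + f₁ y) / 2) x
      ≤ ((√(posGradSq f₀ x) + √(posGradSq f₁ x)) / 2) ^ 2 := by
  set u : Fin n → ℝ := fun i => max (f₀ (flipCoord i x) - f₀ x) 0 / 2
  set v : Fin n → ℝ := fun i => max (f₁ (flipCoord i x) - f₁ x) 0 / 2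
  have hterm : ∀ i, (max ((f₀ (flipCoord i x) + f₁ (flipCoord i x)) / 2 - (f₀ x + f₁ x) / 2) 0
      / 2) ^ 2 ≤ ((u i + v i) / 2) ^ 2 := by
    intro i
    gcongr
    apply max_le
    · simp only [u, v]
      linarith [le_max_left (f₀ (flipCoord i x) - f₀ x) 0,
        le_max_left (f₁ (flipCoord i x) - f₁ x) 0]
    · positivity
  calc posGradSq (fun y => (f₀ y + f₁ y) / 2) x
      ≤ ∑ i, ((u i + v i) / 2) ^ 2 := sum_le_sum fun i _ => hterm i
    _ = (√(∑ i, (u i + v i) ^ 2) / 2) ^ 2 := by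
        rw [div_pow, Real.sq_sqrt (by positivity), sum_div]
        simp only [div_pow]
    _ ≤ ((√(posGradSq f₀ x) + √(posGradSq f₁ x)) / 2) ^ 2 := by
        gcongr
        exact sqrt_sum_add_sq_le u v

/-- A discrete analogue of Bobkov's functional isoperimetric inequality. -/
theorem profile_mean_le_sum_sqrt (f : (Fin n → ZMod 2) → ℝ) (hf : ∀ x, f x ∈ Set.Icc (0 : ℝ) 1) :
    2 ^ n * profile ((∑ x, f x) / 2 ^ n) ≤ ∑ x, √(profile (f x) ^ 2 + posGradSq f x) := by
  induction n with
  | zero => simp [posGradSq, Real.sqrt_sq (profile_nonneg (hf _).1 (hf _).2)]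
  | succ n ih =>
    set m : (Fin n → ZMod 2) → ℝ := fun x => (f (Fin.cons 0 x) + f (Fin.cons 1 x)) / 2
    have hm : ∀ x, m x ∈ Set.Icc (0 : ℝ) 1 := fun x => by
      obtain ⟨h₀, h₀'⟩ := hf (Fin.cons 0 x)
      obtain ⟨h₁, h₁'⟩ := hf (Fin.cons 1 x)
      constructor <;> simp only [m] <;> linarith
    have hmean : (∑ x, f x) / 2 ^ (n + 1) = (∑ x, m x) / 2 ^ n := by
      rw [sum_cube_eq_sum_cons f, ← sum_div, pow_succ]
      ring
    have hstep : ∀ x, 2 * √(profile (m x) ^ 2 + posGradSq m x)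
        ≤ √(profile (f (Fin.cons 0 x)) ^ 2 + posGradSq f (Fin.cons 0 x))
          + √(profile (f (Fin.cons 1 x)) ^ 2 + posGradSq f (Fin.cons 1 x)) := by
      intro x
      obtain ⟨h₀, h₀'⟩ := hf (Fin.cons 0 x)
      obtain ⟨h₁, h₁'⟩ := hf (Fin.cons 1 x)
      rw [posGradSq_cons, posGradSq_cons, show (0 : ZMod 2) + 1 = 1 by decide,
        show (1 : ZMod 2) + 1 = 0 by decide]
      calc 2 * √(profile (m x) ^ 2 + posGradSq m x)
          ≤ 2 * √(profile (m x) ^ 2 + ((√(posGradSq (fun y => f (Fin.cons 0 y)) x)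
              + √(posGradSq (fun y => f (Fin.cons 1 y)) x)) / 2) ^ 2) := by
            gcongr
            exact posGradSq_avg_le _ _ x
        _ ≤ _ := profile_tensor_step h₀ h₀' h₁ h₁' (posGradSq_nonneg _ _) (posGradSq_nonneg _ _)
    calc 2 ^ (n + 1) * profile ((∑ x, f x) / 2 ^ (n + 1))
        = 2 * (2 ^ n * profile ((∑ x, m x) / 2 ^ n)) := by rw [hmean]; ring
      _ ≤ 2 * ∑ x, √(profile (m x) ^ 2 + posGradSq m x) := by gcongr; exact ih m hm
      _ ≤ _ := by rw [mul_sum]; exact sum_le_sum fun x _ => hstep x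
      _ = _ := (sum_cube_eq_sum_cons _).symm

def outerBoundary (S : Finset (Fin n → ZMod 2)) : Finset (Fin n → ZMod 2) :=
  {x | x ∉ S ∧ ∃ i, flipCoord i x ∈ S}

lemma sqrt_posGradSq_indicator_le (S : Finset (Fin n → ZMod 2)) (x : Fin n → ZMod 2) :
    √(posGradSq (fun y => if y ∈ S then 1 else 0) x)
      ≤ if x ∈ outerBoundary S then √n / 2 else 0 := by
  split_ifs with hx
  · have hle : posGradSq (fun y => if y ∈ S then 1 else 0) x ≤ ∑ _i : Fin n, (1 / 2 : ℝ) ^ 2 := by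
      refine sum_le_sum fun i _ => ?_
      gcongr
      refine max_le ?_ zero_le_one
      dsimp only
      split_ifs <;> norm_num
    calc _ ≤ √(∑ _i : Fin n, (1 / 2 : ℝ) ^ 2) := Real.sqrt_le_sqrt hle
      _ = √n / 2 := by simp [div_eq_mul_inv]
  · refine (Real.sqrt_eq_zero'.2 (sum_nonpos fun i _ => ?_)).le
    have hmono : (if flipCoord i x ∈ S then (1 : ℝ) else 0) ≤ if x ∈ S then 1 else 0 := by
      by_cases hxS : x ∈ S
      · simp only [hxS, if_true]; split_ifs <;> norm_num
      · have : flipCoord i x ∉ S := fun h => hx (by simpa [outerBoundary, hxS] using ⟨i, h⟩)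
        simp [hxS, this]
    simp [max_eq_right (sub_nonpos.2 hmono)]

theorem card_mul_le_sqrt_mul_card_outerBoundary (S : Finset (Fin n → ZMod 2)) :
    (#S : ℝ) * (2 ^ n - #S) ≤ 2 ^ n * √n * #(outerBoundary S) := by
  set f : (Fin n → ZMod 2) → ℝ := fun y => if y ∈ S then 1 else 0
  have hf : ∀ x, f x ∈ Set.Icc (0 : ℝ) 1 := fun x => by
    simp only [f]; split_ifs <;> norm_num
  have hprofile : ∀ x, profile (f x) = 0 := fun x => by
    simp only [f, profile]; split_ifs <;> norm_num
  have hsum : ∑ x, f x = #S := by simp [f]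
  have hbound : ∑ x, √(profile (f x) ^ 2 + posGradSq f x) ≤ #(outerBoundary S) * (√n / 2) := by
    calc _ ≤ ∑ x, if x ∈ outerBoundary S then √n / 2 else 0 := by
          simpa only [hprofile, zero_pow two_ne_zero, zero_add] using
            sum_le_sum fun x _ => sqrt_posGradSq_indicator_le S x
      _ = _ := by rw [sum_ite_mem, univ_inter, sum_const, nsmul_eq_mul]
  have hbobkov := (profile_mean_le_sum_sqrt f hf).trans hbound
  rw [hsum] at hbobkov
  calc (#S : ℝ) * (2 ^ n - #S) = 2 * 2 ^ n * (2 ^ n * profile (#S / 2 ^ n)) := by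
        unfold profile; field_simp
    _ ≤ 2 * 2 ^ n * (#(outerBoundary S) * (√n / 2)) := by gcongr
    _ = _ := by ring

theorem card_le_two_mul_sqrt_mul_card_outerBoundary {S : Finset (Fin n → ZMod 2)}
    (hS : 2 * #S ≤ 2 ^ n) : (#S : ℝ) ≤ 2 * √n * #(outerBoundary S) := by
  have hS' : (2 : ℝ) * #S ≤ 2 ^ n := by exact_mod_cast hS
  refine le_of_mul_le_mul_left ?_ (by positivity : (0 : ℝ) < 2 ^ n / 2)
  calc 2 ^ n / 2 * (#S : ℝ) ≤ #S * (2 ^ n - #S) := by nlinarith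
    _ ≤ 2 ^ n * √n * #(outerBoundary S) := card_mul_le_sqrt_mul_card_outerBoundary S
    _ = _ := by ring

lemma cubeGraph_adj_iff {d : ℕ} {x y : Fin d → ZMod 2} :
    (cubeGraph d).Adj x y ↔ ∃ i, y = flipCoord i x := by
  have hne : ∀ a b : ZMod 2, a ≠ b ↔ b = a + 1 := by decide
  change #{i | x i ≠ y i} = 1 ↔ _
  simp only [card_eq_one, Finset.ext_iff, mem_filter, mem_univ, true_and, mem_singleton,
    funext_iff, flipCoord, Function.update_apply]
  refine exists_congr fun i => forall_congr' fun j => ?_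
  by_cases h : j = i <;> simp [h, hne, eq_comm]

/-- The even side of `Q_{n+1}` is a copy of `Q_n`: a vertex is determined by its last `n`
coordinates, and the first one restores even parity. -/
def toEven (x : Fin n → ZMod 2) : Fin (n + 1) → ZMod 2 := Fin.cons (∑ i, x i) x

def toOdd (x : Fin n → ZMod 2) : Fin (n + 1) → ZMod 2 := Fin.cons (∑ i, x i + 1) x

lemma toEven_injective : Function.Injective (toEven (n := n)) := fun x y h => by
  simpa [toEven] using congrArg Fin.tail h

lemma toOdd_injective : Function.Injective (toOdd (n := n)) := fun x y h => by
  simpa [toOdd] using congrArg Fin.tail h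

lemma range_toEven : Set.range (toEven (n := n)) = evenSide (n + 1) := by
  ext y
  simp only [Set.mem_range, evenSide, Set.mem_ofPred_eq, Fin.sum_univ_succ, CharTwo.add_eq_zero]
  constructor
  · rintro ⟨x, rfl⟩
    simp [toEven]
  · intro hy
    exact ⟨Fin.tail y, by rw [toEven, ← Fin.cons_self_tail y, hy]; rfl⟩

lemma toOdd_eq_flipCoord_zero (x : Fin n → ZMod 2) : toOdd x = flipCoord 0 (toEven x) :=
  (flipCoord_cons_zero _ x).symm

lemma toOdd_flipCoord (i : Fin n) (x : Fin n → ZMod 2) :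
    toOdd (flipCoord i x) = flipCoord i.succ (toEven x) := by
  rw [toOdd, toEven, flipCoord_cons_succ, sum_flipCoord, add_assoc, CharTwo.add_self_eq_zero,
    add_zero]

lemma nbhd_image_toEven (S : Set (Fin n → ZMod 2)) :
    nbhd (cubeGraph (n + 1)) (toEven '' S) = toOdd '' {x | x ∈ S ∨ ∃ i, flipCoord i x ∈ S} := by
  ext y
  simp only [nbhd, Set.mem_image, Set.mem_ofPred_eq, cubeGraph_adj_iff]
  constructor
  · rintro ⟨_, ⟨x, hx, rfl⟩, i, rfl⟩
    cases i using Fin.cases with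
    | zero => exact ⟨x, Or.inl hx, toOdd_eq_flipCoord_zero x⟩
    | succ i => exact ⟨flipCoord i x, Or.inr ⟨i, by rwa [flipCoord_flipCoord]⟩, toOdd_flipCoord i x⟩
  · rintro ⟨x, hx | ⟨i, hi⟩, rfl⟩
    · exact ⟨_, ⟨x, hx, rfl⟩, 0, toOdd_eq_flipCoord_zero x⟩
    · exact ⟨_, ⟨_, hi, rfl⟩, i.succ, by rw [← toOdd_flipCoord, flipCoord_flipCoord]⟩

lemma exists_finset_eq_image_toEven {A : Set (Fin (n + 1) → ZMod 2)} (hA : A ⊆ evenSide (n + 1)) :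
    ∃ S : Finset (Fin n → ZMod 2), A = toEven '' (S : Set (Fin n → ZMod 2)) :=
  ⟨(Set.toFinite (toEven ⁻¹' A)).toFinset, by
    rw [Set.Finite.coe_toFinset, Set.image_preimage_eq_of_subset (range_toEven ▸ hA)]⟩

lemma ncard_image_toEven (S : Finset (Fin n → ZMod 2)) :
    (toEven '' (S : Set (Fin n → ZMod 2))).ncard = #S := by
  rw [Set.ncard_image_of_injective _ toEven_injective, Set.ncard_coe_finset]

lemma ncard_nbhd_image_toEven (S : Finset (Fin n → ZMod 2)) :
    (nbhd (cubeGraph (n + 1)) (toEven '' (S : Set (Fin n → ZMod 2)))).ncard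
      = #S + #(outerBoundary S) := by
  have hunion : {x | x ∈ (S : Set (Fin n → ZMod 2)) ∨ ∃ i, flipCoord i x ∈ (S : Set _)}
      = ((S ∪ outerBoundary S : Finset (Fin n → ZMod 2)) : Set (Fin n → ZMod 2)) := by
    ext x
    simp only [outerBoundary, Set.mem_ofPred_eq, mem_coe, coe_union, coe_filter, Set.mem_union,
      mem_univ, true_and]
    tauto
  have hdisj : Disjoint S (outerBoundary S) :=
    disjoint_left.2 fun _ hx hx' => (mem_filter.1 hx').2.1 hx
  rw [nbhd_image_toEven, hunion, Set.ncard_image_of_injective _ toOdd_injective,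
    Set.ncard_coe_finset, card_union_of_disjoint hdisj]

end

end Hypercube

/-- isoperimetry in the cube: there is `c > 0` such that for all large `d`
and every nonempty `A ⊆ E` with `|A| ≤ 2^(d-2)`,
`(|N(A)| - |A|)/|N(A)| ≥ c/√d`. -/
theorem cube_isoperimetry :
    ∃ c : ℝ, 0 < c ∧ ∃ d₀ : ℕ, ∀ d ≥ d₀, ∀ A : Set (Fin d → ZMod 2),
      A ⊆ evenSide d → A.Nonempty → A.ncard ≤ 2 ^ (d - 2) →
      (((nbhd (cubeGraph d) A).ncard : ℝ) - A.ncard) / (nbhd (cubeGraph d) A).ncard ≥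
        c / Real.sqrt d := by
  refine ⟨1 / 3, by norm_num, 2, fun d hd A hAE hAne hAcard => ?_⟩
  obtain ⟨n, rfl⟩ : ∃ n, d = n + 1 := ⟨d - 1, by omega⟩
  obtain ⟨S, rfl⟩ := Hypercube.exists_finset_eq_image_toEven hAE
  rw [Hypercube.ncard_image_toEven] at hAcard ⊢
  rw [Hypercube.ncard_nbhd_image_toEven]
  have hS : (1 : ℝ) ≤ #S := by exact_mod_cast (coe_nonempty.1 hAne.of_image).card_pos
  have hhalf : 2 * #S ≤ 2 ^ n := by
    have : 2 ^ n = 2 * 2 ^ (n + 1 - 2) := by rw [← pow_succ']; congr 1; omega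
    omega
  have hboundary := Hypercube.card_le_two_mul_sqrt_mul_card_outerBoundary hhalf
  have hsqrt : √(n : ℝ) ≤ √((n : ℝ) + 1) := Real.sqrt_le_sqrt (by linarith)
  have hsqrt₁ : 1 ≤ √((n : ℝ) + 1) := Real.one_le_sqrt.2 (by linarith [n.cast_nonneg (α := ℝ)])
  have hO := (#(Hypercube.outerBoundary S)).cast_nonneg (α := ℝ)
  push_cast
  rw [ge_iff_le, div_le_div_iff₀ (by positivity) (by linarith)]
  nlinarith
end
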